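/- Any lex-optimal allocation is strongly stable: for every subset S of nodes, there is no allocation d̂ on the induced subgraph G_S (each node in S distributing its full endowment to its neighbors within S) such that every node in S receives at least as much as under the lex-optimal allocation and at least one node in S receives strictly more. -/

import Mathlib

open Finset

noncomputable section

variable {V : Type*}

/-- An allocation: nonnegative, supported on edges, each node distributes its full endowment. -/
def IsAlloc [Fintype V] [DecidableEq V] (G : SimpleGraph V) [DecidableRel G.Adj]
    (D : V → ℝ) (d : V → V → ℝ) : Prop :=
  (∀ i j, 0 ≤ d i j) ∧ (∀ i j, ¬ G.Adj i j → d i j = 0) ∧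
  (∀ i, ∑ j ∈ G.neighborFinset i, d i j = D i)

/-- Received resource of node `i`. -/
def recv [Fintype V] [DecidableEq V] (G : SimpleGraph V) [DecidableRel G.Adj]
    (d : V → V → ℝ) (i : V) : ℝ := ∑ j ∈ G.neighborFinset i, d j i

/-- Exchange ratio of node `i`. -/
def ratio [Fintype V] [DecidableEq V] (G : SimpleGraph V) [DecidableRel G.Adj]
    (D : V → ℝ) (d : V → V → ℝ) (i : V) : ℝ := recv G d i / D i

/-- Total resource flowing into `S` from outside. -/
def inFlow [Fintype V] [DecidableEq V] (G : SimpleGraph V) [DecidableRel G.Adj]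
    (d : V → V → ℝ) (S : Finset V) : ℝ :=
  ∑ i ∈ S, ∑ j ∈ G.neighborFinset i \ S, d j i

/-- Total resource flowing out of `S`. -/
def outFlow [Fintype V] [DecidableEq V] (G : SimpleGraph V) [DecidableRel G.Adj]
    (d : V → V → ℝ) (S : Finset V) : ℝ :=
  ∑ i ∈ S, ∑ j ∈ G.neighborFinset i \ S, d i j

/-- Sorted (non-decreasing) list of exchange ratios. -/
def sortedRatios [Fintype V] [DecidableEq V] (G : SimpleGraph V) [DecidableRel G.Adj]
    (D : V → ℝ) (d : V → V → ℝ) : List ℝ :=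
  (Finset.univ.val.map (ratio G D d)).sort (· ≤ ·)

/-- Lexicographic optimality: no allocation gives a lexicographically larger sorted ratio vector. -/
def LexOpt [Fintype V] [DecidableEq V] (G : SimpleGraph V) [DecidableRel G.Adj]
    (D : V → ℝ) (d : V → V → ℝ) : Prop :=
  IsAlloc G D d ∧ ∀ d', IsAlloc G D d' →
    ¬ List.Lex (· < ·) (sortedRatios G D d) (sortedRatios G D d')

/-- Minimum exchange ratio. -/
def minRatio [Fintype V] [Nonempty V] [DecidableEq V] (G : SimpleGraph V) [DecidableRel G.Adj]
    (D : V → ℝ) (d : V → V → ℝ) : ℝ := Finset.univ.inf' Finset.univ_nonempty (ratio G D d)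

/-- Maximum exchange ratio. -/
def maxRatio [Fintype V] [Nonempty V] [DecidableEq V] (G : SimpleGraph V) [DecidableRel G.Adj]
    (D : V → ℝ) (d : V → V → ℝ) : ℝ := Finset.univ.sup' Finset.univ_nonempty (ratio G D d)

/-- The set `L₁` of nodes attaining the minimum exchange ratio. -/
def minSet [Fintype V] [Nonempty V] [DecidableEq V] (G : SimpleGraph V) [DecidableRel G.Adj]
    (D : V → ℝ) (d : V → V → ℝ) : Finset V :=
  Finset.univ.filter (fun i => ratio G D d i = minRatio G D d)

/-- The set `L_K` of nodes attaining the maximum exchange ratio. -/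
def maxSet [Fintype V] [Nonempty V] [DecidableEq V] (G : SimpleGraph V) [DecidableRel G.Adj]
    (D : V → ℝ) (d : V → V → ℝ) : Finset V :=
  Finset.univ.filter (fun i => ratio G D d i = maxRatio G D d)

/-- External neighborhood of a set of nodes. -/
def extNbhd [Fintype V] [DecidableEq V] (G : SimpleGraph V) [DecidableRel G.Adj]
    (S : Finset V) : Finset V := (S.biUnion fun i => G.neighborFinset i) \ S

/-- An allocation on the subgraph induced by `S`: each node of `S` distributes its
full endowment among its neighbors within `S` (if it has any), nothing flows elsewhere. -/
def AllocOn [Fintype V] [DecidableEq V] (G : SimpleGraph V) [DecidableRel G.Adj]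
    (D : V → ℝ) (S : Finset V) (d : V → V → ℝ) : Prop :=
  (∀ i j, 0 ≤ d i j) ∧
  (∀ i j, ¬ (i ∈ S ∧ j ∈ S ∧ G.Adj i j) → d i j = 0) ∧
  (∀ i ∈ S, (G.neighborFinset i ∩ S).Nonempty →
    ∑ j ∈ G.neighborFinset i ∩ S, d i j = D i)

/-!
In a lex-optimal allocation a node `j` only sends to neighbours of least ratio among its
neighbours: otherwise moving a little of what it sends to a richer neighbour `m` over to a
poorer one `i` raises the sorted ratio vector lexicographically. Consequently
`ρ a * ρ b ≥ 1` on every edge: on the set `P` of nodes lying on an edge of least product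
`c`, everything sent from `P` goes to a partner with product `c`, so `P` is closed under the
flow, and counting what `P` sends and receives with weights `1` and `1 / ρ` gives
`c⁻¹ * recv P ≤ D P ≤ recv P`, i.e. `c ≥ 1`. Therefore the weights `g = 1 / (1 + ρ)` satisfy
`g i ≤ ρ j * g j` along every edge, and any allocation on `S` gives
`∑_S g * recv ≤ ∑_S ρ * g * D`, which is `∑_S g * recv` of the lex-optimal allocation:
no allocation on `S` can improve on it weakly everywhere and strictly somewhere.
-/

theorem List.lex_lt_of_least_sub_mem_left :
    ∀ {L M : List ℝ}, L.Pairwise (· ≤ ·) → M.Pairwise (· ≤ ·) → L.length = M.length →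
    ∀ {w : ℝ}, w ∈ (L - M : Multiset ℝ) → (∀ z ∈ (L - M : Multiset ℝ), w ≤ z) →
    (∀ z ∈ (M - L : Multiset ℝ), w < z) → List.Lex (· < ·) L M
  | [], _, _, _, _, _, hw, _, _ => by simp at hw
  | _ :: _, [], _, _, hlen, _, _, _, _ => by simp at hlen
  | a :: L, b :: M, hL, hM, hlen, w, hw, hLM, hML => by
    rw [List.pairwise_cons] at hL hM
    rcases lt_trichotomy a b with hab | rfl | hba
    · exact .rel hab
    · have hsub : ∀ L M : List ℝ, ((a :: L : List ℝ) - (a :: M) : Multiset ℝ) = L - M := by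
        intro L M
        simpa [← Multiset.cons_coe, ← Multiset.singleton_add] using
          add_tsub_add_eq_tsub_left ({a} : Multiset ℝ) L M
      rw [hsub] at hw hLM hML
      exact .cons (lex_lt_of_least_sub_mem_left hL.2 hM.2 (by simpa using hlen) hw hLM hML)
    · have hbL : b ∉ a :: L := by
        simp only [List.mem_cons, not_or]
        exact ⟨hba.ne, fun hb => (hL.1 b hb).not_gt hba⟩
      have hb : b ∈ ((b :: M : List ℝ) - (a :: L) : Multiset ℝ) := by
        rw [← Multiset.count_pos, Multiset.count_sub,
          Multiset.count_eq_zero.2 (Multiset.mem_coe.not.2 hbL)]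
        simp
      have hwL : w ∈ a :: L := by simpa using Multiset.mem_of_le (Multiset.sub_le_self _ _) hw
      have haw : a ≤ w := by
        rcases List.mem_cons.1 hwL with rfl | hw
        exacts [le_rfl, hL.1 w hw]
      exact absurd (hML b hb) (by linarith)

theorem Multiset.lex_sort_add_of_least {a b : Multiset ℝ} (u : Multiset ℝ)
    (hcard : Multiset.card a = Multiset.card b) {w : ℝ} (hw : w ∈ a) (ha : ∀ z ∈ a, w ≤ z)
    (hb : ∀ z ∈ b, w < z) :
    List.Lex (· < ·) ((a + u).sort (· ≤ ·)) ((b + u).sort (· ≤ ·)) := by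
  have hwb : w ∉ b := fun h => (hb w h).false
  apply List.lex_lt_of_least_sub_mem_left (Multiset.pairwise_sort _ _)
    (Multiset.pairwise_sort _ _) (by simp [hcard]) (w := w) <;>
    simp only [Multiset.sort_eq, add_tsub_add_eq_tsub_right]
  · rw [← Multiset.count_pos, Multiset.count_sub, Multiset.count_eq_zero.2 hwb]
    exact Multiset.count_pos.2 hw
  · exact fun z hz => ha z (Multiset.mem_of_le (Multiset.sub_le_self _ _) hz)
  · exact fun z hz => hb z (Multiset.mem_of_le (Multiset.sub_le_self _ _) hz)

theorem lex_sort_map_univ_of_eq_off_pair {V : Type*} [Fintype V] [DecidableEq V] {f g : V → ℝ}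
    {i m : V} (him : i ≠ m) (hfg : ∀ v, v ≠ i → v ≠ m → g v = f v) (hm : f i < f m)
    (hgi : f i < g i) (hgm : f i < g m) :
    List.Lex (· < ·) ((Finset.univ.val.map f).sort (· ≤ ·))
      ((Finset.univ.val.map g).sort (· ≤ ·)) := by
  set R := (Finset.univ.val.erase i).erase m
  have huniv : Finset.univ.val = {i, m} + R := by
    rw [Multiset.insert_eq_cons, Multiset.cons_add, Multiset.singleton_add,
      Multiset.cons_erase, Multiset.cons_erase (Finset.mem_univ_val i)]
    exact (Multiset.mem_erase_of_ne him.symm).2 (Finset.mem_univ_val m)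
  have hR : R.map g = R.map f := Multiset.map_congr rfl fun v hv => by
    have hvm := (Finset.univ.nodup.erase i).mem_erase_iff.1 hv
    exact hfg v (Finset.univ.nodup.mem_erase_iff.1 hvm.2).1 hvm.1
  rw [huniv, Multiset.map_add, Multiset.map_add, hR]
  refine Multiset.lex_sort_add_of_least _ (by simp) (w := f i) (by simp) ?_ ?_ <;>
    simp [hm.le, hgi, hgm]

section Allocation

variable [Fintype V] [DecidableEq V] {G : SimpleGraph V} [DecidableRel G.Adj] {D : V → ℝ}
  {d : V → V → ℝ}

theorem recv_eq_sum_univ (hd : ∀ i j, ¬ G.Adj i j → d i j = 0) (i : V) :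
    recv G d i = ∑ j, d j i :=
  sum_subset (subset_univ _) fun j _ hj => hd j i fun h => hj (by simpa using h.symm)

theorem recv_eq_ratio_mul {i : V} (hD : D i ≠ 0) : recv G d i = ratio G D d i * D i :=
  (div_mul_cancel₀ _ hD).symm

theorem IsAlloc.adj_of_ne_zero (hd : IsAlloc G D d) {i j : V} (hij : d i j ≠ 0) : G.Adj i j :=
  not_imp_comm.1 (hd.2.1 i j) hij

theorem IsAlloc.sum_univ (hd : IsAlloc G D d) (i : V) : ∑ j, d i j = D i := by
  rw [← hd.2.2 i]
  exact (sum_subset (subset_univ _) fun j _ hj => hd.2.1 i j fun h => hj (by simpa using h)).symm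

theorem IsAlloc.exists_pos (hd : IsAlloc G D d) {i : V} (hi : 0 < D i) :
    ∃ j, G.Adj i j ∧ 0 < d i j := by
  obtain ⟨j, hj, hpos⟩ := exists_lt_of_sum_lt (s := G.neighborFinset i) (f := fun _ => 0)
    (g := d i) (by simpa [hd.2.2 i] using hi)
  exact ⟨j, by simpa using hj, hpos⟩

theorem sum_sum_mul_le_sum_mul_recv (hd0 : ∀ i j, 0 ≤ d i j)
    (hd : ∀ i j, ¬ G.Adj i j → d i j = 0) {P : Finset V}
    (hP : ∀ x ∈ P, ∀ w, d x w ≠ 0 → w ∈ P) {f : V → ℝ} (hf : ∀ w, 0 ≤ f w) :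
    ∑ x ∈ P, ∑ w, d x w * f w ≤ ∑ w ∈ P, f w * recv G d w := by
  calc ∑ x ∈ P, ∑ w, d x w * f w = ∑ x ∈ P, ∑ w ∈ P, d x w * f w :=
        sum_congr rfl fun x hx => (sum_subset (subset_univ P) fun w _ hw => by
          rw [not_imp_comm.1 (hP x hx w) hw, zero_mul]).symm
    _ = ∑ w ∈ P, ∑ x ∈ P, d x w * f w := sum_comm
    _ ≤ ∑ w ∈ P, ∑ x, d x w * f w := sum_le_sum fun w _ =>
        sum_le_sum_of_subset_of_nonneg (subset_univ P) fun x _ _ => mul_nonneg (hd0 x w) (hf w)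
    _ = ∑ w ∈ P, f w * recv G d w := by simp only [recv_eq_sum_univ hd, mul_sum, mul_comm]

def transfer (d : V → V → ℝ) (j i m : V) (δ : ℝ) (a b : V) : ℝ :=
  d a b + (if a = j ∧ b = i then δ else 0) - (if a = j ∧ b = m then δ else 0)

theorem IsAlloc.transfer (hd : IsAlloc G D d) {j i m : V} (hji : G.Adj j i) (hjm : G.Adj j m)
    {δ : ℝ} (hδ : 0 ≤ δ) (hδd : δ ≤ d j m) : IsAlloc G D (_root_.transfer d j i m δ) := by
  refine ⟨fun a b => ?_, fun a b hab => ?_, fun a => ?_⟩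
  · have := hd.1 a b
    unfold _root_.transfer
    split_ifs <;> grind
  · have := hd.2.1 a b hab
    unfold _root_.transfer
    split_ifs <;> grind
  · by_cases ha : a = j
    · subst ha
      simp [_root_.transfer, sum_add_distrib, sum_sub_distrib, hd.2.2, hji, hjm]
    · simp [_root_.transfer, ha, hd.2.2]

theorem recv_transfer {j i m : V} (hji : G.Adj j i) (hjm : G.Adj j m) (δ : ℝ) (y : V) :
    recv G (transfer d j i m δ) y =
      recv G d y + (if y = i then δ else 0) - (if y = m then δ else 0) := by
  by_cases hyi : y = i <;> by_cases hym : y = m <;> subst_vars <;>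
    simp [recv, transfer, sum_add_distrib, sum_sub_distrib, hji.symm, hjm.symm, *]

theorem IsAlloc.one_le_of_ratio_mul_eq (hd : IsAlloc G D d) (hD : ∀ i, 0 < D i)
    (hρ : ∀ i, 0 < ratio G D d i) {P : Finset V} (hP : P.Nonempty)
    (hclosed : ∀ a ∈ P, ∀ b, d a b ≠ 0 → b ∈ P) {c : ℝ} (hc : 0 < c)
    (hpair : ∀ a ∈ P, ∀ b, d a b ≠ 0 → ratio G D d a * ratio G D d b = c) : 1 ≤ c := by
  have hsent := sum_sum_mul_le_sum_mul_recv hd.1 hd.2.1 hclosed (f := fun _ => 1)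
    fun _ => zero_le_one
  have hweighted := sum_sum_mul_le_sum_mul_recv hd.1 hd.2.1 hclosed
    (f := fun w => (ratio G D d w)⁻¹) fun w => (inv_pos.2 (hρ w)).le
  have hpaired : ∀ a ∈ P, ∑ b, d a b * (ratio G D d b)⁻¹ = c⁻¹ * recv G d a := fun a ha => by
    rw [recv_eq_ratio_mul (hD a).ne', ← hd.sum_univ a, mul_sum, mul_sum]
    refine sum_congr rfl fun b _ => ?_
    by_cases hab : d a b = 0
    · simp [hab]
    · rw [← hpair a ha b hab]
      field_simp [(hρ a).ne', (hρ b).ne']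
  have hrecv : ∀ b, (ratio G D d b)⁻¹ * recv G d b = D b := fun b => by
    rw [recv_eq_ratio_mul (hD b).ne', inv_mul_cancel_left₀ (hρ b).ne']
  simp only [mul_one, one_mul, hd.sum_univ] at hsent
  rw [sum_congr rfl hpaired, ← mul_sum, sum_congr rfl fun b _ => hrecv b] at hweighted
  have hR : 0 < ∑ a ∈ P, recv G d a := sum_pos (fun a _ => by
    rw [recv_eq_ratio_mul (hD a).ne']; exact mul_pos (hρ a) (hD a)) hP
  by_contra! hc1
  have := (one_lt_inv₀ hc).2 hc1
  nlinarith

end Allocation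

section LexOpt

variable [Fintype V] [DecidableEq V] {G : SimpleGraph V} [DecidableRel G.Adj] {D : V → ℝ}
  {d : V → V → ℝ}

theorem ratio_transfer {j i m : V} (hji : G.Adj j i) (hjm : G.Adj j m)
    (δ : ℝ) (y : V) :
    ratio G D (transfer d j i m δ) y =
      ratio G D d y + (if y = i then δ / D i else 0) - (if y = m then δ / D m else 0) := by
  simp only [ratio, recv_transfer hji hjm, add_div, sub_div]
  split_ifs <;> simp_all

theorem LexOpt.eq_zero_of_ratio_lt (hD : ∀ i, 0 < D i) (hopt : LexOpt G D d) {j i m : V}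
    (hji : G.Adj j i) (hjm : G.Adj j m) (hlt : ratio G D d i < ratio G D d m) : d j m = 0 := by
  set ρ := ratio G D d
  by_contra hne
  have him : i ≠ m := fun h => hlt.ne (congrArg ρ h)
  -- small enough that `m` stays above `ρ i` after handing `δ` of `j`'s gift to `m` over to `i`
  set δ := min (d j m) (D m * (ρ m - ρ i) / 2)
  have hδ : 0 < δ := lt_min ((hopt.1.1 j m).lt_of_ne' hne)
    (by have := hD m; have := sub_pos.2 hlt; positivity)
  have hδm : δ / D m < ρ m - ρ i := by
    rw [div_lt_iff₀ (hD m)]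
    have := min_le_right (d j m) (D m * (ρ m - ρ i) / 2)
    nlinarith [hD m]
  refine hopt.2 _ (hopt.1.transfer hji hjm hδ.le (min_le_left _ _)) ?_
  refine lex_sort_map_univ_of_eq_off_pair him (fun v hvi hvm => ?_) hlt ?_ ?_
  · simp [ratio_transfer hji hjm, hvi, hvm]
  · simpa [ratio_transfer hji hjm, him] using div_pos hδ (hD i)
  · rw [ratio_transfer hji hjm, if_neg him.symm, if_pos rfl]
    linarith

theorem LexOpt.ratio_pos (hD : ∀ i, 0 < D i) (hopt : LexOpt G D d) (i : V) :
    0 < ratio G D d i := by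
  by_contra! hi
  obtain ⟨j, hij, -⟩ := hopt.1.exists_pos (hD i)
  obtain ⟨m, hjm, hpos⟩ := hopt.1.exists_pos (hD j)
  have hmi : ratio G D d m ≤ ratio G D d i :=
    not_lt.1 fun h => hpos.ne' (hopt.eq_zero_of_ratio_lt hD hij.symm hjm h)
  have hdm : d j m ≤ recv G d m :=
    single_le_sum (f := fun a => d a m) (fun a _ => hopt.1.1 a m) (by simpa using hjm.symm)
  rw [recv_eq_ratio_mul (hD m).ne'] at hdm
  nlinarith [hD m]

theorem LexOpt.one_le_ratio_mul_ratio (hD : ∀ i, 0 < D i) (hopt : LexOpt G D d) {x y : V}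
    (hxy : G.Adj x y) : 1 ≤ ratio G D d x * ratio G D d y := by
  set ρ := ratio G D d
  have hρ : ∀ i, 0 < ρ i := hopt.ratio_pos hD
  obtain ⟨e, -, he⟩ := exists_min_image univ (fun e : G.Dart => ρ e.fst * ρ e.snd)
    ⟨⟨(x, y), hxy⟩, mem_univ _⟩
  set c := ρ e.fst * ρ e.snd
  have hc : 0 < c := mul_pos (hρ _) (hρ _)
  have hc_le {a b : V} (hab : G.Adj a b) : c ≤ ρ a * ρ b := he ⟨(a, b), hab⟩ (mem_univ _)
  refine le_trans ?_ (hc_le hxy)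
  set P := univ.filter fun a => ∃ b, G.Adj a b ∧ ρ a * ρ b = c
  have hflow : ∀ a ∈ P, ∀ b, d a b ≠ 0 → ρ a * ρ b = c := by
    intro a ha b hab
    obtain ⟨v, hav, hv⟩ := (mem_filter.1 ha).2
    have hadj : G.Adj a b := hopt.1.adj_of_ne_zero hab
    have hbv : ρ b ≤ ρ v := not_lt.1 fun h => hab (hopt.eq_zero_of_ratio_lt hD hav hadj h)
    exact le_antisymm (hv ▸ mul_le_mul_of_nonneg_left hbv (hρ a).le) (hc_le hadj)
  have hclosed : ∀ a ∈ P, ∀ b, d a b ≠ 0 → b ∈ P := fun a ha b hab =>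
    mem_filter.2 ⟨mem_univ _, a, (hopt.1.adj_of_ne_zero hab).symm,
      by rw [mul_comm]; exact hflow a ha b hab⟩
  exact hopt.1.one_le_of_ratio_mul_eq hD hρ ⟨e.fst, mem_filter.2 ⟨mem_univ _, e.snd, e.adj, rfl⟩⟩
    hclosed hc hflow

end LexOpt

section AllocOn

variable [Fintype V] [DecidableEq V] {G : SimpleGraph V} [DecidableRel G.Adj] {D : V → ℝ}
  {S : Finset V} {d : V → V → ℝ}

theorem AllocOn.adj_of_ne_zero (hd : AllocOn G D S d) {i j : V} (hij : d i j ≠ 0) :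
    i ∈ S ∧ j ∈ S ∧ G.Adj i j :=
  not_imp_comm.1 (hd.2.1 i j) hij

theorem AllocOn.sum_le (hd : AllocOn G D S d) (hD : ∀ i, 0 ≤ D i) {j : V} (hj : j ∈ S) :
    ∑ i ∈ S, d j i ≤ D j := by
  have hS : G.neighborFinset j ∩ S ⊆ S := inter_subset_right
  rw [← sum_subset hS fun i hiS hi => by_contra fun h =>
    hi (by simpa [hiS] using (hd.adj_of_ne_zero h).2.2)]
  by_cases hne : (G.neighborFinset j ∩ S).Nonempty
  · exact (hd.2.2 j hj hne).le
  · simpa [not_nonempty_iff_eq_empty.1 hne] using hD j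

theorem AllocOn.sum_mul_recv_le (hd : AllocOn G D S d) (hD : ∀ i, 0 ≤ D i) {f c : V → ℝ}
    (hc : ∀ j, 0 ≤ c j) (hfc : ∀ j i, G.Adj j i → f i ≤ c j) :
    ∑ i ∈ S, f i * recv G d i ≤ ∑ j ∈ S, c j * D j := by
  have hsupp : ∀ i j, ¬ G.Adj i j → d i j = 0 := fun i j h =>
    by_contra fun hij => h (hd.adj_of_ne_zero hij).2.2
  calc ∑ i ∈ S, f i * recv G d i = ∑ j, ∑ i ∈ S, f i * d j i := by
        simp only [recv_eq_sum_univ hsupp, mul_sum]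
        exact sum_comm
    _ = ∑ j ∈ S, ∑ i ∈ S, f i * d j i := (sum_subset (subset_univ S) fun j _ hj =>
        sum_eq_zero fun i _ => by_contra fun h =>
          hj (hd.adj_of_ne_zero (right_ne_zero_of_mul h)).1).symm
    _ ≤ ∑ j ∈ S, c j * ∑ i ∈ S, d j i := sum_le_sum fun j _ => by
        rw [mul_sum]
        refine sum_le_sum fun i _ => ?_
        by_cases hji : d j i = 0
        · simp [hji]
        · exact mul_le_mul_of_nonneg_right (hfc j i (hd.adj_of_ne_zero hji).2.2) (hd.1 j i)
    _ ≤ ∑ j ∈ S, c j * D j := sum_le_sum fun j hj =>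
        mul_le_mul_of_nonneg_left (hd.sum_le hD hj) (hc j)

end AllocOn

theorem inv_one_add_le_mul_inv_one_add {a b : ℝ} (ha : 0 ≤ a) (hb : 0 ≤ b) (hab : 1 ≤ a * b) :
    (1 + b)⁻¹ ≤ a * (1 + a)⁻¹ := by
  rw [← div_eq_mul_inv, inv_eq_one_div, div_le_div_iff₀ (by positivity) (by positivity)]
  linarith

theorem stmt15_general [Fintype V] [DecidableEq V] (G : SimpleGraph V) [DecidableRel G.Adj]
    (D : V → ℝ) (hD : ∀ i, 0 < D i) (d : V → V → ℝ)
    (hopt : LexOpt G D d) (S : Finset V) :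
    ¬ ∃ dhat : V → V → ℝ, AllocOn G D S dhat ∧
      (∀ i ∈ S, recv G d i ≤ recv G dhat i) ∧
      (∃ j ∈ S, recv G d j < recv G dhat j) := by
  rintro ⟨dhat, hdhat, hge, j, hjS, hj⟩
  set ρ := ratio G D d
  have hρ : ∀ i, 0 < ρ i := hopt.ratio_pos hD
  set g : V → ℝ := fun i => (1 + ρ i)⁻¹
  have hg : ∀ i, 0 < g i := fun i => inv_pos.2 (by linarith [hρ i])
  have hle := hdhat.sum_mul_recv_le (fun i => (hD i).le) (f := g) (c := fun j => ρ j * g j)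
    (fun j => (mul_pos (hρ j) (hg j)).le) fun j i hji =>
      inv_one_add_le_mul_inv_one_add (hρ j).le (hρ i).le (hopt.one_le_ratio_mul_ratio hD hji)
  have hlt : ∑ i ∈ S, g i * recv G d i < ∑ i ∈ S, g i * recv G dhat i :=
    sum_lt_sum (fun i hi => mul_le_mul_of_nonneg_left (hge i hi) (hg i).le)
      ⟨j, hjS, mul_lt_mul_of_pos_left hj (hg j)⟩
  have hrecv : ∑ i ∈ S, ρ i * g i * D i = ∑ i ∈ S, g i * recv G d i :=
    sum_congr rfl fun i _ => by rw [recv_eq_ratio_mul (hD i).ne']; ring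
  linarith

theorem stmt15 [Fintype V] [Nonempty V] [DecidableEq V] (G : SimpleGraph V) [DecidableRel G.Adj]
    (hconn : G.Connected) (D : V → ℝ) (hD : ∀ i, 0 < D i) (d : V → V → ℝ)
    (hopt : LexOpt G D d) (S : Finset V) :
    ¬ ∃ dhat : V → V → ℝ, AllocOn G D S dhat ∧
      (∀ i ∈ S, recv G d i ≤ recv G dhat i) ∧
      (∃ j ∈ S, recv G d j < recv G dhat j) :=
  stmt15_general G D hD d hopt S

end
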